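/- arXiv:2007.11708 — 4 statements merged into one kernel-verified Lean document; each statement's English description precedes it below -/
import Mathlib

section
/- Let (q: E → M, ξ, λ) be a coalgebra λ of the weak comonad (T, ℓ) in a tangent category, equipped with maps q: E → M, ξ: M → E with q∘ξ = id_M and ξ∘q = p_E∘λ (a splitting of the idempotent p∘λ). Then λ∘ξ = 0_E∘ξ automatically holds, so (q, ξ, λ) is a pre-differential bundle. -/
open CategoryTheory

/-- A coalgebra `λ : E ⟶ T E` of the weak comonad `(T, ℓ)` equipped with a chosen
splitting `q : E ⟶ M`, `ξ : M ⟶ E` of the idempotent `p ∘ λ` automatically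
satisfies `λ ∘ ξ = 0 ∘ ξ`, hence is a pre-differential bundle. -/
theorem stmt10 {C : Type*} [Category C] (T : C ⥤ C)
    (p : T ⟶ 𝟭 C) (z : 𝟭 C ⟶ T) (ℓ : T ⟶ T ⋙ T)
    (hpz : ∀ M : C, z.app M ≫ p.app M = 𝟙 M)
    (hpl : ∀ M : C, ℓ.app M ≫ p.app (T.obj M) = p.app M ≫ z.app M)
    {E M : C} (lam : E ⟶ T.obj E) (q : E ⟶ M) (ξ : M ⟶ E)
    (hco : lam ≫ T.map lam = lam ≫ ℓ.app E)
    (hsec : ξ ≫ q = 𝟙 M)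
    (hsplit : lam ≫ p.app E = q ≫ ξ) :
    ξ ≫ lam = ξ ≫ z.app E := by
  have hnat : T.map lam ≫ p.app (T.obj E) = p.app E ≫ lam := p.naturality lam
  have key : lam ≫ p.app E ≫ lam = lam ≫ p.app E ≫ z.app E := by
    have h := congrArg (· ≫ p.app (T.obj E)) hco
    simpa only [Category.assoc, hnat, hpl] using h
  calc ξ ≫ lam = ξ ≫ q ≫ ξ ≫ lam := by
        rw [← Category.assoc, hsec, Category.id_comp]
    _ = ξ ≫ lam ≫ p.app E ≫ lam := by rw [← Category.assoc q, ← hsplit, Category.assoc]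
    _ = ξ ≫ lam ≫ p.app E ≫ z.app E := by rw [key]
    _ = ξ ≫ q ≫ ξ ≫ z.app E := by rw [← Category.assoc lam, hsplit, Category.assoc]
    _ = ξ ≫ z.app E := by rw [← Category.assoc, hsec, Category.id_comp]
end

section
/- Let q: E → M be the projection of a smooth vector bundle and suppose (q', ξ', λ') is another smooth vector bundle with its vertical lift, and f: E → E', f₀: M → M' are smooth maps with q'∘f = f₀∘q and T(f)∘λ = λ'∘f (f commutes with the vertical lifts). Then f is fibrewise linear: f(a + b) = f(a) + f(b) for a, b in the same fibre, and f(r • a) = r • f(a) for all r ∈ ℝ. -/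
/-- A smooth bundle map commuting with the vertical lifts is fibrewise linear
(stated in local trivialisations `E = B × V` over `B` and `E' = B' × V'` over
`B'`, where the vertical lift is `λ(m,a) = ((m,0),(0,a))` and the tangent
functor sends `f` to `T(f)(e,w) = (f e, (df)_e w)`). -/
theorem stmt13 {B V B' V' : Type*}
    [NormedAddCommGroup B] [NormedSpace ℝ B]
    [NormedAddCommGroup V] [NormedSpace ℝ V]
    [NormedAddCommGroup B'] [NormedSpace ℝ B']
    [NormedAddCommGroup V'] [NormedSpace ℝ V']
    (lam : B × V → (B × V) × (B × V))
    (hlam : lam = fun e => ((e.1, (0 : V)), ((0 : B), e.2)))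
    (lam' : B' × V' → (B' × V') × (B' × V'))
    (hlam' : lam' = fun e => ((e.1, (0 : V')), ((0 : B'), e.2)))
    (f : B × V → B' × V') (hf : ContDiff ℝ (⊤ : ℕ∞) f)
    (f₀ : B → B') (hbundle : ∀ e : B × V, (f e).1 = f₀ e.1)
    (Tf : (B × V) × (B × V) → (B' × V') × (B' × V'))
    (hTf : Tf = fun x => (f x.1, fderiv ℝ f x.1 x.2))
    (hlift : ∀ e : B × V, Tf (lam e) = lam' (f e)) :
    (∀ (m : B) (a b : V), (f (m, a + b)).2 = (f (m, a)).2 + (f (m, b)).2) ∧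
    (∀ (m : B) (r : ℝ) (a : V), (f (m, r • a)).2 = r • (f (m, a)).2) := by
  subst hlam hlam' hTf
  have key : ∀ (m : B) (a : V),
      ((0 : B'), (f (m, a)).2) = fderiv ℝ f (m, 0) ((0 : B), a) := by
    intro m a
    have h := hlift (m, a)
    simp only at h
    exact (congrArg Prod.snd h).symm
  constructor
  · intro m a b
    have h := key m (a + b)
    rw [show ((0:B), a + b) = ((0:B), a) + ((0:B), b) by simp, map_add,
      ← key m a, ← key m b, Prod.mk_add_mk, zero_add] at h
    exact congrArg Prod.snd h
  · intro m r a
    have h := key m (r • a)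
    rw [show ((0:B), r • a) = r • ((0:B), a) by simp, map_smul,
      ← key m a, Prod.smul_mk, smul_zero] at h
    exact congrArg Prod.snd h
end

section
/- Let q₁: E₁ → M be a smooth vector bundle and φ: E₁ → E₁ a smooth fibrewise-linear idempotent bundle endomorphism over id_M (φ∘φ = φ, q₁∘φ = q₁). Then the image of φ, E₂ = {e ∈ E₁ : φ(e) = e}, is an embedded smooth submanifold of E₁, and the restriction q₂: E₂ → M is a smooth vector bundle. -/
/-!
Fix `b₀` and put `p = φ b₀`. For `b` near `b₀` the operator `T b = φ b p + (1 - φ b)(1 - p)`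
is close to `T b₀ = 1`, hence invertible, and it satisfies `φ b ∘ T b = T b ∘ p` (both sides equal
`φ b ∘ p`). So `T b` maps the fixed space `range p` isomorphically onto `range (φ b)`, and composing
`T b` with a fixed basis of `range p` gives a smooth local frame of the image bundle.
-/

open Manifold Function Set

section ProjIntertwiner

variable {R : Type*} [Ring R]

def projIntertwiner (p q : R) : R := q * p + (1 - q) * (1 - p)

lemma projIntertwiner_self {p : R} (hp : IsIdempotentElem p) : projIntertwiner p p = 1 := by
  have expand : projIntertwiner p p = 1 - p - p + p * p + p * p := by
    unfold projIntertwiner; noncomm_ring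
  rw [expand, hp.eq]
  abel

lemma mul_projIntertwiner (p : R) {q : R} (hq : IsIdempotentElem q) :
    q * projIntertwiner p q = q * p := by
  have expand : q * projIntertwiner p q = q * q * p + (q - q * q) * (1 - p) := by
    unfold projIntertwiner; noncomm_ring
  rw [expand, hq.eq, sub_self, zero_mul, add_zero]

lemma projIntertwiner_mul {p : R} (hp : IsIdempotentElem p) (q : R) :
    projIntertwiner p q * p = q * p := by
  have expand : projIntertwiner p q * p = q * (p * p) + (1 - q) * (p - p * p) := by
    unfold projIntertwiner; noncomm_ring
  rw [expand, hp.eq, sub_self, mul_zero, add_zero]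

end ProjIntertwiner

lemma Set.range_comp_eq_range_of_semiconj {α β : Type*} {T p q : α → α} {e : β → α}
    (hT : Surjective T) (hTpq : q ∘ T = T ∘ p) (he : range e = range p) :
    range (T ∘ e) = range q := by
  rw [range_comp, he, ← range_comp, ← hTpq, hT.range_comp]

lemma Set.bijOn_fiberwise {B C V : Type*} {U : Set B} {F : B → Set V} {ψ : B → C → V}
    (hinj : ∀ b ∈ U, Injective (ψ b)) (hrange : ∀ b ∈ U, range (ψ b) = F b) :
    BijOn (fun bc : B × C => (bc.1, ψ bc.1 bc.2)) (U ×ˢ univ) {x | x.1 ∈ U ∧ x.2 ∈ F x.1} := by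
  refine ⟨?_, ?_, ?_⟩
  · rintro ⟨b, c⟩ ⟨hb, -⟩
    exact ⟨hb, hrange b hb ▸ mem_range_self c⟩
  · rintro ⟨b, c⟩ ⟨hb, -⟩ ⟨b', c'⟩ - h
    obtain ⟨rfl, hc⟩ := Prod.mk.inj h
    exact Prod.ext rfl (hinj b hb hc)
  · rintro ⟨b, v⟩ ⟨hb, hv⟩
    obtain ⟨c, rfl⟩ : v ∈ range (ψ b) := hrange b hb ▸ hv
    exact ⟨(b, c), ⟨hb, trivial⟩, rfl⟩

section TopologicalModule

variable {R M : Type*} [TopologicalSpace M]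

lemma IsIdempotentElem.setOf_apply_eq_self [Semiring R] [AddCommMonoid M] [Module R M]
    {q : M →L[R] M} (hq : IsIdempotentElem q) : {v | q v = v} = range q := by
  ext v
  refine ⟨fun hv => ⟨v, hv⟩, ?_⟩
  rintro ⟨w, rfl⟩
  exact congr($hq w)

lemma ContinuousLinearMap.bijective_of_isUnit [Semiring R] [AddCommMonoid M] [Module R M]
    {T : M →L[R] M} (hT : IsUnit T) : Bijective T :=
  (ContinuousLinearEquiv.unitsEquiv R M hT.unit).bijective

lemma ContinuousLinearMap.range_projIntertwiner_comp [Ring R] [AddCommGroup M]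
    [IsTopologicalAddGroup M] [Module R M] {F : Type*} {p q : M →L[R] M}
    (hp : IsIdempotentElem p) (hq : IsIdempotentElem q) (hT : IsUnit (projIntertwiner p q))
    {e : F → M} (he : range e = range p) :
    range (⇑(projIntertwiner p q) ∘ e) = {v | q v = v} := by
  rw [hq.setOf_apply_eq_self]
  refine range_comp_eq_range_of_semiconj (bijective_of_isUnit hT).2 ?_ he
  exact congrArg DFunLike.coe ((mul_projIntertwiner p hq).trans (projIntertwiner_mul hp q).symm)

end TopologicalModule

lemma Submodule.exists_injective_clm_range_eq {𝕜 V : Type*} [NontriviallyNormedField 𝕜]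
    [CompleteSpace 𝕜] [AddCommGroup V] [Module 𝕜 V] [TopologicalSpace V] [IsTopologicalAddGroup V]
    [ContinuousSMul 𝕜 V] (S : Submodule 𝕜 V) [FiniteDimensional 𝕜 S] :
    ∃ (n : ℕ) (e : (Fin n → 𝕜) →L[𝕜] V), Injective e ∧ range e = S := by
  let b := Module.finBasis 𝕜 S
  refine ⟨_, LinearMap.toContinuousLinearMap (S.subtype ∘ₗ b.equivFun.symm.toLinearMap),
    Subtype.val_injective.comp b.equivFun.symm.injective, ?_⟩
  change range (Subtype.val ∘ b.equivFun.symm) = S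
  rw [range_comp, b.equivFun.symm.surjective.range_eq, image_univ, Subtype.range_val]

open ContinuousLinearMap in
theorem stmt15_general
    {EB : Type*} [NormedAddCommGroup EB] [NormedSpace ℝ EB]
    {HB : Type*} [TopologicalSpace HB] (IB : ModelWithCorners ℝ EB HB)
    {B : Type*} [TopologicalSpace B] [ChartedSpace HB B]
    {V : Type*} [NormedAddCommGroup V] [NormedSpace ℝ V] [FiniteDimensional ℝ V]
    (φ : B → V →L[ℝ] V)
    (hφ : ContMDiff IB 𝓘(ℝ, V →L[ℝ] V) (⊤ : ℕ∞) φ)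
    (hidem : ∀ b, (φ b).comp (φ b) = φ b) :
    ∀ b₀ : B, ∃ U : Set B, IsOpen U ∧ b₀ ∈ U ∧ ∃ n : ℕ,
      ∃ ψ : B → (Fin n → ℝ) →L[ℝ] V,
        ContMDiffOn IB 𝓘(ℝ, (Fin n → ℝ) →L[ℝ] V) (⊤ : ℕ∞) ψ U ∧
        (∀ b ∈ U, Function.Injective (ψ b)) ∧
        (∀ b ∈ U, Set.range (ψ b) = {v : V | φ b v = v}) ∧
        Set.BijOn (fun pc : B × (Fin n → ℝ) => ((pc.1, ψ pc.1 pc.2) : B × V))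
          (U ×ˢ (Set.univ : Set (Fin n → ℝ)))
          {p : B × V | p.1 ∈ U ∧ φ p.1 p.2 = p.2} := by
  intro b₀
  have hφ_idem : ∀ b, IsIdempotentElem (φ b) := hidem
  let T : B → V →L[ℝ] V := fun b => projIntertwiner (φ b₀) (φ b)
  have hT : ContMDiff IB 𝓘(ℝ, V →L[ℝ] V) (⊤ : ℕ∞) T :=
    (hφ.clm_comp contMDiff_const).add ((contMDiff_const.sub hφ).clm_comp contMDiff_const)
  let U := T ⁻¹' {A | IsUnit A}
  obtain ⟨n, e, he_inj, he_range⟩ := (φ b₀).range.exists_injective_clm_range_eq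
  have hinj : ∀ b ∈ U, Injective (T b ∘L e) := fun b hb => (bijective_of_isUnit hb).1.comp he_inj
  have hrange : ∀ b ∈ U, range (T b ∘L e) = {v | φ b v = v} := fun b hb =>
    range_projIntertwiner_comp (hφ_idem b₀) (hφ_idem b) hb he_range
  exact ⟨U, Units.isOpen.preimage hT.continuous, by simp [U, T, projIntertwiner_self (hφ_idem b₀)],
    n, fun b => T b ∘L e, (hT.clm_comp contMDiff_const).contMDiffOn, hinj, hrange,
    bijOn_fiberwise hinj hrange⟩

/-- The image of a smooth fibrewise-linear idempotent endomorphism `φ` of a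
smooth vector bundle (presented in a local trivialisation as the trivial bundle
`B × V` over a smooth manifold `B`) is a smooth vector bundle: around every
point of the base there is a smooth local frame `ψ` for the fixed-point set of
`φ` which trivialises the image sub-bundle
`E₂ = {(b, v) : φ b v = v}` over a neighbourhood `U`. -/
theorem stmt15
    {EB : Type*} [NormedAddCommGroup EB] [NormedSpace ℝ EB] [FiniteDimensional ℝ EB]
    {HB : Type*} [TopologicalSpace HB] (IB : ModelWithCorners ℝ EB HB) [IB.Boundaryless]
    {B : Type*} [TopologicalSpace B] [ChartedSpace HB B] [IsManifold IB (⊤ : ℕ∞) B]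
    {V : Type*} [NormedAddCommGroup V] [NormedSpace ℝ V] [FiniteDimensional ℝ V]
    (φ : B → V →L[ℝ] V)
    (hφ : ContMDiff IB 𝓘(ℝ, V →L[ℝ] V) (⊤ : ℕ∞) φ)
    (hidem : ∀ b, (φ b).comp (φ b) = φ b) :
    ∀ b₀ : B, ∃ U : Set B, IsOpen U ∧ b₀ ∈ U ∧ ∃ n : ℕ,
      ∃ ψ : B → (Fin n → ℝ) →L[ℝ] V,
        ContMDiffOn IB 𝓘(ℝ, (Fin n → ℝ) →L[ℝ] V) (⊤ : ℕ∞) ψ U ∧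
        (∀ b ∈ U, Function.Injective (ψ b)) ∧
        (∀ b ∈ U, Set.range (ψ b) = {v : V | φ b v = v}) ∧
        Set.BijOn (fun pc : B × (Fin n → ℝ) => ((pc.1, ψ pc.1 pc.2) : B × V))
          (U ×ˢ (Set.univ : Set (Fin n → ℝ)))
          {p : B × V | p.1 ∈ U ∧ φ p.1 p.2 = p.2} :=
  stmt15_general IB φ hφ hidem
end

section
/- With q(x,y) = (1−δ(y))x + δ(y)x³ as above, ξ: ℝ → ℝ² given by ξ(z) = (z, 0), and λ: ℝ² → T(ℝ²) ≅ ℝ⁴ given by λ(x, y) = (q(x,y), 0, 0, y), the identities q∘ξ = id, λ∘ξ = 0∘ξ, and T(λ)∘λ = ℓ∘λ hold, where 0: ℝ² → ℝ⁴ is the tangent zero section 0(a,b) = (a,b,0,0) and ℓ: ℝ⁴ → ℝ⁸ is the canonical flip-lift ℓ(a,b,c,d) = (a,b,0,0,0,0,c,d). Hence (q, ξ, λ) is a pre-differential bundle that is not a differential (vector) bundle. -/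
lemma qderiv (δ : ℝ → ℝ) (hδ : ContDiff ℝ (⊤ : ℕ∞) δ) (x y0 : ℝ) (hd : deriv δ y0 = 0) :
    HasFDerivAt (fun p : ℝ × ℝ => (1 - δ p.2) * p.1 + δ p.2 * p.1 ^ 3)
      (((1 - δ y0) + δ y0 * (3 * x ^ 2)) • ContinuousLinearMap.fst ℝ ℝ ℝ) (x, y0) := by
  have hdy : HasFDerivAt (fun p : ℝ × ℝ => δ p.2)
      (0 : (ℝ × ℝ) →L[ℝ] ℝ) (x, y0) := by
    have h1 : HasDerivAt δ 0 y0 := by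
      have := (hδ.differentiable (by simp) y0).hasDerivAt
      rwa [hd] at this
    have := h1.hasFDerivAt.comp (x, y0) (hasFDerivAt_snd (𝕜 := ℝ) (p := (x, y0)))
    refine this.congr_fderiv ?_
    refine ContinuousLinearMap.ext fun v => ?_
    simp
  have hfst : HasFDerivAt (fun p : ℝ × ℝ => p.1)
      (ContinuousLinearMap.fst ℝ ℝ ℝ) (x, y0) := hasFDerivAt_fst
  have h2 : HasFDerivAt (fun p : ℝ × ℝ => (1 - δ p.2))
      (-(0 : (ℝ × ℝ) →L[ℝ] ℝ)) (x, y0) := by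
    exact ((hasFDerivAt_const (1:ℝ) (x, y0)).sub hdy).congr_fderiv (by simp)
  have h3 := (h2.mul hfst).add (hdy.mul ((hfst.mul hfst).mul hfst))
  have hfun : (fun p : ℝ × ℝ => (1 - δ p.2) * p.1 + δ p.2 * p.1 ^ 3)
      = fun p : ℝ × ℝ => (1 - δ p.2) * p.1 + δ p.2 * (p.1 * p.1 * p.1) := by
    funext p; ring
  rw [hfun]
  refine h3.congr_fderiv ?_
  refine ContinuousLinearMap.ext fun v => ?_
  simp
  ring


/-- With `q(x,y) = (1−δ(y))x + δ(y)x³`, `ξ(z) = (z,0)` and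
`λ(x,y) = (q(x,y), 0, 0, y)` (identifying `T(ℝ²) = ℝ² × ℝ²` and
`T(ℝ⁴) = ℝ⁴ × ℝ⁴`, with `T(λ)(e, w) = (λ e, (dλ)_e w)`), the pre-differential
bundle identities `q∘ξ = id`, `p∘λ = ξ∘q`, `λ∘ξ = 0∘ξ` and `T(λ)∘λ = ℓ∘λ`
hold, where `0` is the tangent zero section and `ℓ(a,b,c,d) = (a,b,0,0,0,0,c,d)`
is the canonical lift; yet `q` is not a submersion (its differential at `(0,1)`
is not surjective), so `(q, ξ, λ)` is not a differential (vector) bundle. -/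
theorem stmt18 (δ : ℝ → ℝ) (hδ : ContDiff ℝ (⊤ : ℕ∞) δ) (hmono : Monotone δ)
    (h0 : ∀ y ≤ (0 : ℝ), δ y = 0) (h1 : ∀ y, (1 : ℝ) ≤ y → δ y = 1)
    (q : ℝ × ℝ → ℝ)
    (hq : q = fun p => (1 - δ p.2) * p.1 + δ p.2 * p.1 ^ 3)
    (ξ : ℝ → ℝ × ℝ) (hξ : ξ = fun z => (z, (0 : ℝ)))
    (lam : ℝ × ℝ → (ℝ × ℝ) × (ℝ × ℝ))
    (hlam : lam = fun e => ((q e, (0 : ℝ)), ((0 : ℝ), e.2)))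
    (p : (ℝ × ℝ) × (ℝ × ℝ) → ℝ × ℝ) (hp : p = Prod.fst)
    (zero : ℝ × ℝ → (ℝ × ℝ) × (ℝ × ℝ))
    (hzero : zero = fun e => (e, ((0 : ℝ), (0 : ℝ))))
    (ℓ : (ℝ × ℝ) × (ℝ × ℝ) → ((ℝ × ℝ) × (ℝ × ℝ)) × ((ℝ × ℝ) × (ℝ × ℝ)))
    (hℓ : ℓ = fun x => ((x.1, ((0 : ℝ), (0 : ℝ))), (((0 : ℝ), (0 : ℝ)), x.2)))
    (Tlam : (ℝ × ℝ) × (ℝ × ℝ) → ((ℝ × ℝ) × (ℝ × ℝ)) × ((ℝ × ℝ) × (ℝ × ℝ)))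
    (hTlam : Tlam = fun x => (lam x.1, fderiv ℝ lam x.1 x.2)) :
    (∀ z, q (ξ z) = z) ∧
    (∀ e, p (lam e) = ξ (q e)) ∧
    (∀ z, lam (ξ z) = zero (ξ z)) ∧
    (∀ e, Tlam (lam e) = ℓ (lam e)) ∧
    ¬ Function.Surjective (fderiv ℝ q ((0 : ℝ), (1 : ℝ))) := by
  have hδ0 : δ 0 = 0 := h0 0 le_rfl
  have hδ1 : δ 1 = 1 := h1 1 le_rfl
  have hge : ∀ y, (0:ℝ) ≤ δ y := by
    intro y
    rcases le_total y 0 with h | h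
    · rw [h0 y h]
    · calc (0:ℝ) = δ 0 := hδ0.symm
        _ ≤ δ y := hmono h
  have hle : ∀ y, δ y ≤ 1 := by
    intro y
    rcases le_total y 1 with h | h
    · calc δ y ≤ δ 1 := hmono h
        _ = 1 := hδ1
    · rw [h1 y h]
  have hd0 : deriv δ 0 = 0 := by
    refine IsLocalMin.deriv_eq_zero ?_
    exact Filter.Eventually.of_forall fun y => by rw [hδ0]; exact hge y
  have hd1 : deriv δ 1 = 0 := by
    refine IsLocalMax.deriv_eq_zero ?_
    exact Filter.Eventually.of_forall fun y => by rw [hδ1]; exact hle y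
  have hqz : ∀ z : ℝ, q (z, 0) = z := by
    intro z; simp [hq, hδ0]
  refine ⟨?_, ?_, ?_, ?_, ?_⟩
  · intro z; rw [hξ]; exact hqz z
  · intro e; simp [hlam, hp, hξ]
  · intro z; simp [hlam, hzero, hξ, hqz]
  · intro e
    have hQ := qderiv δ hδ (q e) 0 hd0
    rw [← hq] at hQ
    have hL : HasFDerivAt lam
        ((((1 - δ 0 + δ 0 * (3 * q e ^ 2)) • ContinuousLinearMap.fst ℝ ℝ ℝ).prod
          (0 : (ℝ × ℝ) →L[ℝ] ℝ)).prod
          ((0 : (ℝ × ℝ) →L[ℝ] ℝ).prod (ContinuousLinearMap.snd ℝ ℝ ℝ))) (q e, 0) := by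
      rw [hlam]
      exact (hQ.prodMk (hasFDerivAt_const 0 _)).prodMk
        ((hasFDerivAt_const 0 _).prodMk hasFDerivAt_snd)
    rw [hTlam]
    simp only [hℓ]
    have h1' : lam e = ((q e, 0), (0, e.2)) := by rw [hlam]
    rw [h1', hL.fderiv]
    simp [hlam, hqz]
  · have hQ := qderiv δ hδ 0 1 hd1
    rw [← hq] at hQ
    rw [hQ.fderiv]
    intro hs
    obtain ⟨v, hv⟩ := hs 1
    simp [hδ1] at hv
end
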